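/- Let α > −1, κ ≥ 2 an integer, and let A_κ be the (κ+1)×(κ+1) matrix with A_{1,1} = 0, A_{1,j} = j + α for 2 ≤ j ≤ κ, A_{1,κ+1} = 1; A_{j+1,j} = j + α for 1 ≤ j ≤ κ − 1; A_{j,j} = −(j + α) for 2 ≤ j ≤ κ; A_{κ+1,κ} = (κ + α)(κ + 1 + α); A_{κ+1,κ+1} = 1; all other entries 0. Let p_k = (2 + α) Γ(k + α) Γ(3 + 2α)/(Γ(k + 3 + 2α) Γ(1 + α)) and define v ∈ ℝ^{κ+1} by v_i = p_i/(2 + α) for 1 ≤ i ≤ κ and v_{κ+1} = (2 + α)^{−1} Σ_{l>κ} p_l (l + α). Then A_κ v = (2 + α) v, all coordinates of v are positive, and aᵀv = 1 for a = (1 + α, 2 + α, …, κ + α, 1)ᵀ. -/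

import Mathlib

/-! The tail sums `Σ_{l>k} p_l (l+α)` have the closed form
`q_k = C · Γ(k+2+α) / Γ(k+3+2α)`: the functional equation of `Γ` gives
`q_k - q_{k+1} = (k+1+α) p_{k+1}`, and `q_k → 0` because `(1+α) q_{k+1} = (k+2+α)(q_k - q_{k+1})`
would otherwise force the decrements to dominate a harmonic series. With `q_0 = 2+α` and
`q_k = (k+α)(k+1+α) p_k / (1+α)` for `k ≥ 1`, the first row of `A_κ v = (2+α) v` and the
normalization `aᵀ v = 1` are telescoping sums, the middle rows are the recursion
`p_{k+1} (k+3+2α) = p_k (k+α)`, and the last row is the closed form of `q_κ`. -/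

open Matrix

/-- The `(κ+1) × (κ+1)` transfer matrix `A_κ` of the generalized Pólya urn
representation of the affine preferential attachment tree with attachment function
`f(k) = k + α` (rows/columns indexed by `1, …, κ+1`, realized by `Fin (κ+1)` via
`i ↦ i + 1`). -/
def PATransferMatrix (α : ℝ) (κ : ℕ) : Matrix (Fin (κ + 1)) (Fin (κ + 1)) ℝ :=
  Matrix.of fun i j =>
    let I := (i : ℕ) + 1
    let J := (j : ℕ) + 1
    if I = 1 then
      (if J = 1 then 0 else if J = κ + 1 then 1 else (J : ℝ) + α)
    else if I = κ + 1 then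
      (if J = κ then ((κ : ℝ) + α) * ((κ : ℝ) + 1 + α) else if J = κ + 1 then 1 else 0)
    else if I = J then -((I : ℝ) + α)
    else if I = J + 1 then (J : ℝ) + α
    else 0

open Filter Topology Finset

theorem Antitone.hasSum_sub_succ {u : ℕ → ℝ} {L : ℝ} (hu : Antitone u)
    (h : Tendsto u atTop (𝓝 L)) : HasSum (fun n => u n - u (n + 1)) (u 0 - L) := by
  rw [hasSum_iff_tendsto_nat_of_nonneg fun n => sub_nonneg.mpr (hu n.le_succ)]
  simpa only [sum_range_sub'] using (tendsto_const_nhds (x := u 0)).sub h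

theorem tendsto_zero_of_mul_le_mul_sub_succ {u : ℕ → ℝ} {b c : ℝ} (hb : 0 < b) (hc : 0 < c)
    (hu0 : ∀ n, 0 ≤ u n) (hu : ∀ n, c * u (n + 1) ≤ (n + b) * (u n - u (n + 1))) :
    Tendsto u atTop (𝓝 0) := by
  have hnb (n : ℕ) : 0 < (n : ℝ) + b := by positivity
  have hanti : Antitone u := antitone_nat_of_succ_le fun n => sub_nonneg.mp <|
    nonneg_of_mul_nonneg_right ((mul_nonneg hc.le (hu0 (n + 1))).trans (hu n)) (hnb n)
  have hbdd : BddBelow (Set.range u) := ⟨0, Set.forall_mem_range.mpr hu0⟩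
  have hlim := tendsto_atTop_ciInf hanti hbdd
  set L := ⨅ n, u n
  convert hlim
  refine le_antisymm (le_ciInf hu0) (not_lt.mp fun hL => ?_)
  have hharmonic : Summable fun n : ℕ => 1 / |(n : ℝ) + b| ^ (1 : ℝ) := by
    refine ((hanti.hasSum_sub_succ hlim).summable.mul_left (c * L)⁻¹).of_nonneg_of_le
      (fun n => by positivity) fun n => ?_
    rw [abs_of_pos (hnb n), Real.rpow_one, one_div, ← div_eq_inv_mul,
      le_div_iff₀ (by positivity), inv_mul_le_iff₀ (hnb n)]
    calc c * L ≤ c * u (n + 1) := by gcongr; exact ciInf_le hbdd _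
      _ ≤ _ := hu n
  exact absurd ((Real.summable_one_div_nat_add_rpow b 1).mp hharmonic) (lt_irrefl 1)

noncomputable def degreeDist (α : ℝ) (k : ℕ) : ℝ :=
  (2 + α) * Real.Gamma ((k : ℝ) + α) * Real.Gamma (3 + 2 * α)
    / (Real.Gamma ((k : ℝ) + 3 + 2 * α) * Real.Gamma (1 + α))

noncomputable def degreeTail (α : ℝ) (k : ℕ) : ℝ :=
  (2 + α) * Real.Gamma (3 + 2 * α) / ((1 + α) * Real.Gamma (1 + α))
    * (Real.Gamma ((k : ℝ) + 2 + α) / Real.Gamma ((k : ℝ) + 3 + 2 * α))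

section DegreeDistribution

variable {α : ℝ}

theorem degreeDist_pos (hα : -1 < α) {k : ℕ} (hk : 1 ≤ k) : 0 < degreeDist α k := by
  have hk' : (1 : ℝ) ≤ k := by exact_mod_cast hk
  have := Real.Gamma_pos_of_pos (show 0 < (k : ℝ) + α by linarith)
  have := Real.Gamma_pos_of_pos (show 0 < (k : ℝ) + 3 + 2 * α by linarith)
  have := Real.Gamma_pos_of_pos (show 0 < 3 + 2 * α by linarith)
  have := Real.Gamma_pos_of_pos (show 0 < 1 + α by linarith)
  unfold degreeDist
  have : 0 < 2 + α := by linarith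
  positivity

theorem degreeTail_pos (hα : -1 < α) (k : ℕ) : 0 < degreeTail α k := by
  have hk : (0 : ℝ) ≤ k := k.cast_nonneg
  have := Real.Gamma_pos_of_pos (show 0 < (k : ℝ) + 2 + α by linarith)
  have := Real.Gamma_pos_of_pos (show 0 < (k : ℝ) + 3 + 2 * α by linarith)
  have := Real.Gamma_pos_of_pos (show 0 < 3 + 2 * α by linarith)
  have := Real.Gamma_pos_of_pos (show 0 < 1 + α by linarith)
  unfold degreeTail
  have : 0 < 2 + α := by linarith
  have : 0 < 1 + α := by linarith
  positivity

theorem degreeTail_zero (hα : -1 < α) : degreeTail α 0 = 2 + α := by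
  have h1 : 0 < 1 + α := by linarith
  have hΓ : Real.Gamma (2 + α) = (1 + α) * Real.Gamma (1 + α) := by
    rw [show 2 + α = (1 + α) + 1 by ring, Real.Gamma_add_one h1.ne']
  have := Real.Gamma_pos_of_pos h1
  have := Real.Gamma_pos_of_pos (show 0 < 3 + 2 * α by linarith)
  rw [degreeTail, Nat.cast_zero, zero_add, zero_add, hΓ]
  field_simp

theorem degreeDist_succ_mul (hα : -1 < α) {k : ℕ} (hk : 1 ≤ k) :
    degreeDist α (k + 1) * ((k : ℝ) + 3 + 2 * α) = degreeDist α k * ((k : ℝ) + α) := by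
  have hk' : (1 : ℝ) ≤ k := by exact_mod_cast hk
  have ha : 0 < (k : ℝ) + α := by linarith
  have hb : 0 < (k : ℝ) + 3 + 2 * α := by linarith
  have := Real.Gamma_pos_of_pos ha
  have := Real.Gamma_pos_of_pos hb
  have := Real.Gamma_pos_of_pos (show 0 < 1 + α by linarith)
  unfold degreeDist
  rw [Nat.cast_succ, show (k : ℝ) + 1 + α = (k + α) + 1 by ring,
    show (k : ℝ) + 1 + 3 + 2 * α = (k + 3 + 2 * α) + 1 by ring,
    Real.Gamma_add_one ha.ne', Real.Gamma_add_one hb.ne']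
  field_simp

theorem degreeTail_eq_mul_degreeDist (hα : -1 < α) {k : ℕ} (hk : 1 ≤ k) :
    degreeTail α k = ((k : ℝ) + α) * ((k : ℝ) + 1 + α) / (1 + α) * degreeDist α k := by
  have hk' : (1 : ℝ) ≤ k := by exact_mod_cast hk
  have ha : 0 < (k : ℝ) + α := by linarith
  have := Real.Gamma_pos_of_pos ha
  have := Real.Gamma_pos_of_pos (show 0 < (k : ℝ) + 3 + 2 * α by linarith)
  have := Real.Gamma_pos_of_pos (show 0 < 1 + α by linarith)
  unfold degreeTail degreeDist
  rw [show (k : ℝ) + 2 + α = (k + α) + 1 + 1 by ring, Real.Gamma_add_one (by linarith),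
    Real.Gamma_add_one ha.ne']
  have : 1 + α ≠ 0 := by linarith
  field_simp
  ring

theorem degreeTail_sub_succ (hα : -1 < α) (k : ℕ) :
    degreeTail α k - degreeTail α (k + 1) = ((k : ℝ) + 1 + α) * degreeDist α (k + 1) := by
  have hk : (0 : ℝ) ≤ k := k.cast_nonneg
  have ha : 0 < (k : ℝ) + 1 + α := by linarith
  have hb : 0 < (k : ℝ) + 3 + 2 * α := by linarith
  have := Real.Gamma_pos_of_pos ha
  have := Real.Gamma_pos_of_pos hb
  have := Real.Gamma_pos_of_pos (show 0 < 1 + α by linarith)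
  unfold degreeTail degreeDist
  push_cast
  rw [show (k : ℝ) + 1 + 2 + α = (k + 1 + α) + 1 + 1 by ring,
    show (k : ℝ) + 2 + α = (k + 1 + α) + 1 by ring,
    show (k : ℝ) + 1 + 3 + 2 * α = (k + 3 + 2 * α) + 1 by ring,
    Real.Gamma_add_one (s := (k : ℝ) + 1 + α + 1) (by linarith), Real.Gamma_add_one ha.ne',
    Real.Gamma_add_one hb.ne']
  have : 1 + α ≠ 0 := by linarith
  field_simp
  ring

theorem tendsto_degreeTail_atTop (hα : -1 < α) : Tendsto (degreeTail α) atTop (𝓝 0) := by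
  refine tendsto_zero_of_mul_le_mul_sub_succ (b := 2 + α) (c := 1 + α) (by linarith)
    (by linarith) (fun n => (degreeTail_pos hα n).le) fun n => le_of_eq ?_
  have : 1 + α ≠ 0 := by linarith
  rw [degreeTail_sub_succ hα, degreeTail_eq_mul_degreeDist hα n.succ_pos]
  push_cast
  field_simp
  ring

theorem degreeTail_antitone (hα : -1 < α) : Antitone (degreeTail α) :=
  antitone_nat_of_succ_le fun k => sub_nonneg.mp <| by
    rw [degreeTail_sub_succ hα]
    exact (mul_pos (by linarith [k.cast_nonneg (α := ℝ)]) (degreeDist_pos hα k.succ_pos)).le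

theorem hasSum_degreeTail (hα : -1 < α) (k : ℕ) :
    HasSum (fun l => degreeDist α (k + 1 + l) * ((k + 1 + l : ℕ) + α)) (degreeTail α k) := by
  have hanti : Antitone fun n => degreeTail α (n + k) :=
    (degreeTail_antitone hα).comp_monotone fun _ _ h => Nat.add_le_add_right h k
  have h := hanti.hasSum_sub_succ ((tendsto_degreeTail_atTop hα).comp (tendsto_add_atTop_nat k))
  rw [zero_add, sub_zero] at h
  convert h using 2 with l
  rw [show l + 1 + k = l + k + 1 by omega,
    degreeTail_sub_succ hα, show k + 1 + l = l + k + 1 by omega]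
  push_cast
  ring

theorem sum_range_mul_degreeDist (hα : -1 < α) (a m : ℕ) :
    ∑ n ∈ range m, (((a + n : ℕ) : ℝ) + 1 + α) * degreeDist α (a + n + 1) =
      degreeTail α a - degreeTail α (a + m) := by
  simp only [← degreeTail_sub_succ hα]
  exact sum_range_sub' (fun n => degreeTail α (a + n)) m

end DegreeDistribution

section TransferMatrix

variable {α : ℝ} {m : ℕ}

theorem PATransferMatrix_mulVec_zero (w : Fin (m + 2) → ℝ) :
    (PATransferMatrix α (m + 1) *ᵥ w) 0 =
      ∑ j : Fin m, ((j + 2 : ℕ) + α) * w j.castSucc.succ + w (Fin.last (m + 1)) := by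
  rw [mulVec, dotProduct, Fin.sum_univ_succ, Fin.sum_univ_castSucc]
  simp only [PATransferMatrix, Nat.add_eq_right, Fin.val_eq_zero_iff,
    Nat.cast_add, Nat.cast_one, neg_add_rev, of_apply, ↓reduceIte, zero_mul, Fin.succ_ne_zero,
    Fin.val_succ, Fin.val_castSucc, ite_mul, one_mul, Fin.succ_last, Nat.succ_eq_add_one,
    Fin.last_eq_zero_iff, Nat.add_eq_zero_iff, one_ne_zero, and_false, Fin.val_last, zero_add,
    Nat.cast_ofNat, add_left_inj]
  exact sum_congr rfl fun j _ => by rw [if_neg j.isLt.ne]; ring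

theorem PATransferMatrix_mulVec_succ {n : ℕ} (hn : n < m) (w : Fin (m + 2) → ℝ) :
    (PATransferMatrix α (m + 1) *ᵥ w) ⟨n + 1, by omega⟩ =
      ((n + 1 : ℕ) + α) * w ⟨n, by omega⟩ - ((n + 2 : ℕ) + α) * w ⟨n + 1, by omega⟩ := by
  rw [mulVec, dotProduct,
    Fintype.sum_eq_add ⟨n, by omega⟩ ⟨n + 1, by omega⟩ (by simp [Fin.ext_iff])]
  · simp only [PATransferMatrix, Nat.add_eq_right, Fin.val_eq_zero_iff, Nat.add_right_cancel_iff,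
      Nat.cast_add, Nat.cast_one, neg_add_rev, of_apply, Fin.mk_eq_zero, Nat.add_eq_zero_iff,
      one_ne_zero, and_false, ↓reduceIte, hn.ne, Nat.add_eq_left, Nat.cast_ofNat]
    ring
  · rintro ⟨j, hj⟩ ⟨hjn, hjn1⟩
    simp only [ne_eq, Fin.mk.injEq] at hjn hjn1
    simp [PATransferMatrix, hn.ne, show n + 1 ≠ j by omega, show n ≠ j by omega]

theorem PATransferMatrix_mulVec_last (w : Fin (m + 2) → ℝ) :
    (PATransferMatrix α (m + 1) *ᵥ w) (Fin.last (m + 1)) =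
      (((m + 1 : ℕ) : ℝ) + α) * (((m + 1 : ℕ) : ℝ) + 1 + α) * w ⟨m, by omega⟩
        + w (Fin.last (m + 1)) := by
  rw [mulVec, dotProduct,
    Fintype.sum_eq_add ⟨m, by omega⟩ (Fin.last (m + 1)) (by simp [Fin.ext_iff])]
  · simp [PATransferMatrix]
  · rintro ⟨j, hj⟩ ⟨hjm, hjl⟩
    simp only [ne_eq, Fin.ext_iff, Fin.val_last] at hjm hjl
    simp [PATransferMatrix, hjm, hjl]

end TransferMatrix

noncomputable def degreeVector (α : ℝ) (κ : ℕ) : Fin (κ + 1) → ℝ :=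
  fun i => if (i : ℕ) + 1 ≤ κ then degreeDist α ((i : ℕ) + 1) else degreeTail α κ

def activityVector (α : ℝ) (κ : ℕ) : Fin (κ + 1) → ℝ :=
  fun i => if (i : ℕ) + 1 ≤ κ then ((i : ℕ) : ℝ) + 1 + α else 1

section DegreeVector

variable {α : ℝ} {κ : ℕ}

theorem degreeVector_pos (hα : -1 < α) (i : Fin (κ + 1)) : 0 < degreeVector α κ i := by
  unfold degreeVector
  split_ifs
  · exact degreeDist_pos hα (by omega)
  · exact degreeTail_pos hα κ

theorem activityVector_dotProduct_degreeVector (hα : -1 < α) :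
    activityVector α κ ⬝ᵥ degreeVector α κ = 2 + α := by
  rw [dotProduct, Fin.sum_univ_castSucc]
  simp only [activityVector, Fin.val_castSucc, Order.add_one_le_iff, Fin.is_lt, ↓reduceIte,
    degreeVector, Fin.val_last, add_le_iff_nonpos_right, nonpos_iff_eq_zero, one_ne_zero, one_mul]
  have h := sum_range_mul_degreeDist hα 0 κ
  simp only [zero_add, degreeTail_zero hα] at h
  rw [Fin.sum_univ_eq_sum_range (fun n => ((n : ℝ) + 1 + α) * degreeDist α (n + 1)), h]
  ring

theorem PATransferMatrix_mulVec_degreeVector (hα : -1 < α) (hκ : 1 ≤ κ) :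
    PATransferMatrix α κ *ᵥ degreeVector α κ = (2 + α) • degreeVector α κ := by
  obtain ⟨m, rfl⟩ := Nat.exists_eq_add_of_le' hκ
  funext i
  rw [Pi.smul_apply, smul_eq_mul]
  rcases i with ⟨_ | n, hi⟩
  · rw [Fin.zero_eta, PATransferMatrix_mulVec_zero]
    simp only [Nat.cast_add, Nat.cast_ofNat, degreeVector, Fin.val_succ, Fin.val_castSucc,
      add_le_add_iff_right, Order.add_one_le_iff, Fin.is_lt, ↓reduceIte, Fin.val_last,
      add_le_iff_nonpos_right, nonpos_iff_eq_zero, one_ne_zero, Fin.coe_ofNat_eq_mod, Nat.zero_mod,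
      zero_add, le_add_iff_nonneg_left, zero_le]
    have hsum : ∑ n ∈ range m, ((n : ℝ) + 2 + α) * degreeDist α (n + 1 + 1) =
        degreeTail α 1 - degreeTail α (m + 1) := by
      rw [Nat.add_comm m, ← sum_range_mul_degreeDist hα 1 m]
      refine sum_congr rfl fun n _ => ?_
      rw [show 1 + n + 1 = n + 1 + 1 by omega]
      push_cast
      ring
    rw [Fin.sum_univ_eq_sum_range (fun n => ((n : ℝ) + 2 + α) * degreeDist α (n + 1 + 1)), hsum,
      degreeTail_eq_mul_degreeDist hα le_rfl]
    have : 1 + α ≠ 0 := by linarith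
    push_cast
    field_simp
    ring
  obtain hn | rfl : n < m ∨ n = m := by omega
  · rw [PATransferMatrix_mulVec_succ hn]
    simp only [Nat.cast_add, Nat.cast_one, degreeVector, add_le_add_iff_right, hn.le, ↓reduceIte,
      Nat.cast_ofNat, Order.add_one_le_iff, hn]
    have h := degreeDist_succ_mul hα (k := n + 1) n.succ_pos
    push_cast at h
    linarith
  · rw [show (⟨n + 1, hi⟩ : Fin (n + 2)) = Fin.last (n + 1) from rfl, PATransferMatrix_mulVec_last]
    simp only [Nat.cast_add, Nat.cast_one, degreeVector, le_refl, ↓reduceIte, Fin.val_last,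
      add_le_iff_nonpos_right, nonpos_iff_eq_zero, one_ne_zero]
    have : 1 + α ≠ 0 := by linarith
    rw [degreeTail_eq_mul_degreeDist hα n.succ_pos]
    push_cast
    field_simp
    ring

end DegreeVector

/-- For `α > −1`, `κ ≥ 2`, the vector
`v = (2+α)⁻¹ (p_1, …, p_κ, Σ_{l>κ} p_l (l+α))` built from the limiting degree
distribution `p_k = (2+α) Γ(k+α) Γ(3+2α)/(Γ(k+3+2α) Γ(1+α))` is a positive eigenvector
of `A_κ` for the eigenvalue `2 + α`, normalized so that `aᵀ v = 1` for the activity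
vector `a = (1+α, …, κ+α, 1)`. -/
theorem stmt_19 (α : ℝ) (hα : -1 < α) (κ : ℕ) (hκ : 2 ≤ κ)
    (p : ℕ → ℝ)
    (hp : ∀ k, 1 ≤ k →
      p k = (2 + α) * Real.Gamma ((k : ℝ) + α) * Real.Gamma (3 + 2 * α)
        / (Real.Gamma ((k : ℝ) + 3 + 2 * α) * Real.Gamma (1 + α)))
    (v : Fin (κ + 1) → ℝ)
    (hv : ∀ i : Fin (κ + 1),
      v i = if (i : ℕ) + 1 ≤ κ then p ((i : ℕ) + 1) / (2 + α)
        else (2 + α)⁻¹ * ∑' l : ℕ, p (κ + 1 + l) * (((κ + 1 + l : ℕ) : ℝ) + α))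
    (act : Fin (κ + 1) → ℝ)
    (hact : ∀ i : Fin (κ + 1),
      act i = if (i : ℕ) + 1 ≤ κ then ((i : ℕ) : ℝ) + 1 + α else 1) :
    (PATransferMatrix α κ) *ᵥ v = (2 + α) • v ∧
    (∀ i : Fin (κ + 1), 0 < v i) ∧
    act ⬝ᵥ v = 1 := by
  have h2α : 2 + α ≠ 0 := by linarith
  have hv' : v = (2 + α)⁻¹ • degreeVector α κ := by
    funext i
    rw [hv i, Pi.smul_apply, smul_eq_mul, degreeVector]
    split_ifs
    · rw [hp _ (Nat.succ_pos _), div_eq_inv_mul]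
      rfl
    · rw [← (hasSum_degreeTail hα κ).tsum_eq]
      exact congrArg _ (tsum_congr fun l => by rw [hp _ (by omega)]; rfl)
  have hact' : act = activityVector α κ := funext hact
  subst hv' hact'
  refine ⟨?_, fun i => mul_pos (inv_pos.mpr (by linarith)) (degreeVector_pos hα i), ?_⟩
  · rw [mulVec_smul, PATransferMatrix_mulVec_degreeVector hα (by omega), smul_comm]
  · rw [dotProduct_smul, activityVector_dotProduct_degreeVector hα, smul_eq_mul,
      inv_mul_cancel₀ h2α]
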